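/- Let N ≥ 1 and let n ≥ 2 be an integer, Λ > 0, and let μ be a Radon measure on ℝ^N satisfying μ(B_r(x)) ≤ Λ rⁿ for every x ∈ ℝ^N and every r ∈ (0,1]. Let g : ℝ^N → [0,∞] be Borel measurable, p ∈ ℝ^N, and R ∈ (0,1]. Suppose the weak stability inequality holds on B_R(p): for every C¹ function φ with compact support contained in B_R(p) and with ∫ φ dμ = 0, one has ∫ g φ² dμ ≤ ∫ |∇φ|² dμ. Then there exists r ∈ (0, R) such that the strong stability inequality holds on B_r(p): ∫ g φ² dμ ≤ ∫ |∇φ|² dμ for every C¹ function φ with compact support contained in B_r(p). -/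

import Mathlib

open MeasureTheory Metric Set
open scoped ENNReal

noncomputable section

abbrev En (N : ℕ) := EuclideanSpace ℝ (Fin N)

/-- The strong stability inequality on `W`: `∫ g φ² dμ ≤ ∫ |∇φ|² dμ` for every `C¹`
function `φ` with compact support contained in `W`. -/
def strongStab (N : ℕ) (μ : Measure (En N)) (g : En N → ℝ≥0∞) (W : Set (En N)) : Prop :=
  ∀ φ : En N → ℝ, ContDiff ℝ 1 φ → HasCompactSupport φ → tsupport φ ⊆ W →
    (∫⁻ x, g x * ENNReal.ofReal (φ x ^ 2) ∂μ)
      ≤ ∫⁻ x, ENNReal.ofReal (‖fderiv ℝ φ x‖ ^ 2) ∂μ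

/-- The weak stability inequality on `W`: as `strongStab`, but only for test functions
with `∫ φ dμ = 0`. -/
def weakStab (N : ℕ) (μ : Measure (En N)) (g : En N → ℝ≥0∞) (W : Set (En N)) : Prop :=
  ∀ φ : En N → ℝ, ContDiff ℝ 1 φ → HasCompactSupport φ → tsupport φ ⊆ W →
    (∫ x, φ x ∂μ) = 0 →
    (∫⁻ x, g x * ENNReal.ofReal (φ x ^ 2) ∂μ)
      ≤ ∫⁻ x, ENNReal.ofReal (‖fderiv ℝ φ x‖ ^ 2) ∂μ

/-!
If strong stability failed on every ball `B_ρ(p)` with `ρ < R`, each of them would carry a test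
function `φ₀` with `∫ |∇φ₀|² dμ < ∫ g φ₀² dμ`, and weak stability forces `∫ φ₀ dμ ≠ 0`. Given a
test function `ψ` supported in `B_R(p)` away from `supp φ₀`, a multiple of `φ₀` can then be added
to `ψ` to reach mean zero; both quadratic forms split over the disjoint supports, and weak
stability of the sum yields the strong inequality for `ψ`. So strong stability holds for test
functions in `B_{R/2}(p)` vanishing near `p`.

For `n ≥ 2` the point `p` has zero capacity: by the growth bound a cutoff across the annulus at
scale `s` has energy `O(s^{n-2}) = O(1)`, so averaging `m` cutoffs across disjoint dyadic annuli
gives functions vanishing near `p`, equal to `1` off a shrinking ball, with energy `O(1/m)`.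
Multiplying a test function by them and passing to the limit (Minkowski for the gradient term,
Fatou and `μ {p} = 0` for the potential term) removes the condition near `p`, so strong stability
holds on `B_{R/2}(p)`, a contradiction.
-/

open Filter Function Topology

theorem ENNReal.le_of_add_mul_le_add_mul {a b c d t : ℝ≥0∞} (ht : t ≠ ∞) (hba : b < a)
    (h : c + t * a ≤ d + t * b) : c ≤ d := by
  refine ENNReal.le_of_add_le_add_right (ENNReal.mul_ne_top ht hba.ne_top) ?_
  calc c + t * b ≤ c + t * a := by gcongr
    _ ≤ d + t * b := h

theorem norm_sum_sq_le_of_pairwise {ι F : Type*} [SeminormedAddCommGroup F] {s : Finset ι}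
    {v : ι → F} (hv : (s : Set ι).Pairwise fun i j => v i = 0 ∨ v j = 0) :
    ‖∑ i ∈ s, v i‖ ^ 2 ≤ ∑ i ∈ s, ‖v i‖ ^ 2 := by
  by_cases h : ∃ i ∈ s, v i ≠ 0
  · obtain ⟨i, hi, hvi⟩ := h
    rw [Finset.sum_eq_single_of_mem i hi fun j hj hji => (hv hj hi hji).resolve_right hvi]
    exact Finset.single_le_sum (f := fun i => ‖v i‖ ^ 2) (fun _ _ => by positivity) hi
  · push Not at h
    rw [Finset.sum_eq_zero h, norm_zero, zero_pow two_ne_zero]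
    positivity

theorem exists_abs_deriv_smoothTransition_le :
    ∃ K : ℝ, ∀ t, |deriv Real.smoothTransition t| ≤ K := by
  have hsupp : HasCompactSupport (deriv Real.smoothTransition) := by
    refine HasCompactSupport.intro (isCompact_Icc (a := 0) (b := 1)) fun t ht => ?_
    rcases not_and_or.1 ht with ht | ht
    · refine (EventuallyEq.deriv_eq (f := fun _ => 0) ?_).trans (deriv_const t 0)
      filter_upwards [Iio_mem_nhds (not_le.1 ht)] with y hy
      exact Real.smoothTransition.zero_of_nonpos hy.le
    · refine (EventuallyEq.deriv_eq (f := fun _ => 1) ?_).trans (deriv_const t 1)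
      filter_upwards [Ioi_mem_nhds (not_le.1 ht)] with y hy
      exact Real.smoothTransition.one_of_one_le hy.le
  exact (Real.smoothTransition.contDiff.continuous_deriv le_rfl).bounded_above_of_compact_support
    hsupp

section Growth

variable {X : Type*} [PseudoMetricSpace X]

def annulus (p : X) (r R : ℝ) : Set X := closedBall p R \ ball p r

theorem pairwise_disjoint_annulus_dyadic (p : X) {ε : ℝ} (hε : 0 < ε) :
    Pairwise (Disjoint on fun j : ℕ => annulus p (ε / 2 ^ j) (3 / 2 * (ε / 2 ^ j))) := by
  intro i j hij
  wlog hlt : i < j generalizing i j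
  · exact (this hij.symm (hij.lt_or_gt.resolve_left hlt)).symm
  have hscale : ε / 2 ^ j ≤ ε / 2 ^ i / 2 := by
    rw [div_div, ← pow_succ]
    exact div_le_div_of_nonneg_left hε.le (by positivity) (pow_le_pow_right₀ one_le_two hlt)
  refine Set.disjoint_left.2 fun x hxi hxj => hxi.2 ?_
  have : 0 < ε / 2 ^ i := by positivity
  exact mem_ball.2 (by linarith [mem_closedBall.1 hxj.1])

variable [MeasurableSpace X] {μ : Measure X} {p : X}

theorem measure_singleton_eq_zero_of_growth {n : ℕ} (hn : n ≠ 0) {Λ : ℝ}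
    (hgrowth : ∀ r, 0 < r → r ≤ 1 → μ (ball p r) ≤ ENNReal.ofReal (Λ * r ^ n)) :
    μ {p} = 0 := by
  have hlim : Tendsto (fun r : ℝ => ENNReal.ofReal (Λ * r ^ n)) (𝓝[>] 0) (𝓝 0) := by
    have : Continuous fun r : ℝ => ENNReal.ofReal (Λ * r ^ n) :=
      ENNReal.continuous_ofReal.comp (by fun_prop)
    simpa [zero_pow hn] using (this.tendsto 0).mono_left nhdsWithin_le_nhds
  refine le_zero_iff.1 (ge_of_tendsto hlim ?_)
  filter_upwards [Ioc_mem_nhdsGT one_pos] with r hr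
  exact (measure_mono (singleton_subset_iff.2 (mem_ball_self hr.1))).trans (hgrowth r hr.1 hr.2)

/-- `(a / s) ^ 2` bounds the squared gradient of a cutoff across the annulus of radius `s`: for
`n ≥ 2` the energy of such a cutoff is bounded independently of the scale. -/
theorem ofReal_mul_measure_annulus_le {n : ℕ} (hn : 2 ≤ n) {Λ : ℝ} (hΛ : 0 ≤ Λ)
    (hgrowth : ∀ r, 0 < r → r ≤ 1 → μ (ball p r) ≤ ENNReal.ofReal (Λ * r ^ n))
    (a : ℝ) {s : ℝ} (hs : 0 < s) (hs1 : s ≤ 1 / 2) :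
    ENNReal.ofReal ((a / s) ^ 2) * μ (annulus p s (3 / 2 * s))
      ≤ ENNReal.ofReal (a ^ 2 * Λ * 2 ^ n) := by
  have hμ : μ (annulus p s (3 / 2 * s)) ≤ ENNReal.ofReal (Λ * (2 * s) ^ n) :=
    (measure_mono (sdiff_subset.trans (closedBall_subset_ball (by linarith)))).trans
      (hgrowth _ (by positivity) (by linarith))
  obtain ⟨k, rfl⟩ : ∃ k, n = k + 2 := ⟨n - 2, by omega⟩
  have hscale : (a / s) ^ 2 * (Λ * (2 * s) ^ (k + 2)) = a ^ 2 * Λ * 2 ^ (k + 2) * s ^ k := by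
    field_simp
    ring
  calc ENNReal.ofReal ((a / s) ^ 2) * μ (annulus p s (3 / 2 * s))
      ≤ ENNReal.ofReal ((a / s) ^ 2) * ENNReal.ofReal (Λ * (2 * s) ^ (k + 2)) := by gcongr
    _ = ENNReal.ofReal (a ^ 2 * Λ * 2 ^ (k + 2) * s ^ k) := by
        rw [← ENNReal.ofReal_mul (by positivity), hscale]
    _ ≤ ENNReal.ofReal (a ^ 2 * Λ * 2 ^ (k + 2)) :=
        ENNReal.ofReal_le_ofReal
          (mul_le_of_le_one_right (by positivity) (pow_le_one₀ hs.le (by linarith)))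

end Growth

section Energies

variable {E : Type*} [NormedAddCommGroup E] [MeasurableSpace E] {μ : Measure E} {g : E → ℝ≥0∞}

def potentialEnergy (μ : Measure E) (g : E → ℝ≥0∞) (φ : E → ℝ) : ℝ≥0∞ :=
  ∫⁻ x, g x * ENNReal.ofReal (φ x ^ 2) ∂μ

theorem potentialEnergy_add_smul_of_disjoint [OpensMeasurableSpace E] (hg : Measurable g)
    {ψ φ : E → ℝ} (hψ : Continuous ψ) (hφ : Continuous φ)
    (hdisj : Disjoint (tsupport ψ) (tsupport φ)) (c : ℝ) :
    potentialEnergy μ g (ψ + c • φ)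
      = potentialEnergy μ g ψ + ENNReal.ofReal (c ^ 2) * potentialEnergy μ g φ := by
  have hmeas {f : E → ℝ} (hf : Continuous f) :
      Measurable fun x => g x * ENNReal.ofReal (f x ^ 2) :=
    hg.mul (hf.measurable.pow_const 2).ennreal_ofReal
  unfold potentialEnergy
  rw [← lintegral_const_mul _ (hmeas hφ), ← lintegral_add_left (hmeas hψ)]
  refine lintegral_congr fun x => ?_
  have hprod : ψ x * φ x = 0 := by
    by_cases hx : x ∈ tsupport ψ
    · rw [image_eq_zero_of_notMem_tsupport (hdisj.notMem_of_mem_left hx), mul_zero]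
    · rw [image_eq_zero_of_notMem_tsupport hx, zero_mul]
  have hsq : (ψ + c • φ) x ^ 2 = ψ x ^ 2 + c ^ 2 * φ x ^ 2 := by
    simp only [Pi.add_apply, Pi.smul_apply, smul_eq_mul]
    linear_combination 2 * c * hprod
  rw [hsq, ENNReal.ofReal_add (sq_nonneg _) (by positivity), ENNReal.ofReal_mul (sq_nonneg c)]
  ring

variable [NormedSpace ℝ E]

def dirichletEnergy (μ : Measure E) (φ : E → ℝ) : ℝ≥0∞ :=
  ∫⁻ x, ENNReal.ofReal (‖fderiv ℝ φ x‖ ^ 2) ∂μ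

theorem dirichletEnergy_eq_eLpNorm_sq (φ : E → ℝ) :
    dirichletEnergy μ φ = eLpNorm (fun x => ‖fderiv ℝ φ x‖) 2 μ ^ 2 := by
  have h := eLpNorm_nnreal_pow_eq_lintegral (μ := μ) (f := fun x => ‖fderiv ℝ φ x‖)
    (p := 2) two_ne_zero
  simp only [NNReal.coe_ofNat, ENNReal.rpow_ofNat, ENNReal.coe_ofNat] at h
  rw [h, dirichletEnergy]
  refine lintegral_congr fun x => ?_
  rw [ENNReal.ofReal_pow (norm_nonneg _), ofReal_norm, enorm_norm]

variable [OpensMeasurableSpace E]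

theorem measurable_ofReal_sq_norm_fderiv {φ : E → ℝ} (hφ : ContDiff ℝ 1 φ) :
    Measurable fun x => ENNReal.ofReal (‖fderiv ℝ φ x‖ ^ 2) :=
  ((hφ.continuous_fderiv one_ne_zero).norm.pow 2).measurable.ennreal_ofReal

theorem eLpNorm_norm_fderiv_mul_le {φ η : E → ℝ} (hφ : ContDiff ℝ 1 φ) (hη : ContDiff ℝ 1 η)
    {M : ℝ} (hφM : ∀ x, |φ x| ≤ M) (hη1 : ∀ x, |η x| ≤ 1) :
    eLpNorm (fun x => ‖fderiv ℝ (φ * η) x‖) 2 μ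
      ≤ eLpNorm (fun x => ‖fderiv ℝ φ x‖) 2 μ
        + ‖M‖ₑ * eLpNorm (fun x => ‖fderiv ℝ η x‖) 2 μ := by
  have hpoint (x : E) : ‖‖fderiv ℝ (φ * η) x‖‖
      ≤ ((fun x => ‖fderiv ℝ φ x‖) + M • fun x => ‖fderiv ℝ η x‖) x := by
    rw [norm_norm, fderiv_mul (hφ.differentiable one_ne_zero x) (hη.differentiable one_ne_zero x)]
    refine (norm_add_le _ _).trans ?_
    rw [norm_smul, norm_smul, Real.norm_eq_abs, Real.norm_eq_abs]
    simp only [Pi.add_apply, Pi.smul_apply, smul_eq_mul]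
    nlinarith [hφM x, hη1 x, norm_nonneg (fderiv ℝ φ x), norm_nonneg (fderiv ℝ η x)]
  refine (eLpNorm_mono_real hpoint).trans ?_
  refine (eLpNorm_add_le ?_ ?_ one_le_two).trans_eq ?_
  · exact (hφ.continuous_fderiv one_ne_zero).norm.aestronglyMeasurable
  · exact (hη.continuous_fderiv one_ne_zero).norm.aestronglyMeasurable.const_smul M
  · rw [eLpNorm_const_smul]

theorem dirichletEnergy_add_smul_of_disjoint {ψ φ : E → ℝ} (hψ : ContDiff ℝ 1 ψ)
    (hφ : ContDiff ℝ 1 φ) (hdisj : Disjoint (tsupport ψ) (tsupport φ)) (c : ℝ) :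
    dirichletEnergy μ (ψ + c • φ)
      = dirichletEnergy μ ψ + ENNReal.ofReal (c ^ 2) * dirichletEnergy μ φ := by
  unfold dirichletEnergy
  rw [← lintegral_const_mul _ (measurable_ofReal_sq_norm_fderiv hφ),
    ← lintegral_add_left (measurable_ofReal_sq_norm_fderiv hψ)]
  refine lintegral_congr fun x => ?_
  have hfderiv_eq_zero {f : E → ℝ} (hx : x ∉ tsupport f) : fderiv ℝ f x = 0 :=
    Function.notMem_support.1 fun h => hx (support_fderiv_subset ℝ h)
  rw [fderiv_add (hψ.differentiable one_ne_zero x)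
    ((hφ.differentiable one_ne_zero x).const_smul c), fderiv_const_smul
    (hφ.differentiable one_ne_zero x)]
  by_cases hx : x ∈ tsupport ψ
  · rw [hfderiv_eq_zero (hdisj.notMem_of_mem_left hx)]
    simp
  · rw [hfderiv_eq_zero hx, zero_add, norm_smul, mul_pow, Real.norm_eq_abs, sq_abs,
      ENNReal.ofReal_mul (sq_nonneg c)]
    simp

theorem potentialEnergy_le_of_disjoint_unstable [IsFiniteMeasureOnCompacts μ]
    (hg : Measurable g) {W : Set E}
    (hweak : ∀ χ : E → ℝ, ContDiff ℝ 1 χ → HasCompactSupport χ → tsupport χ ⊆ W →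
      ∫ x, χ x ∂μ = 0 → potentialEnergy μ g χ ≤ dirichletEnergy μ χ)
    {φ ψ : E → ℝ} (hφ : ContDiff ℝ 1 φ) (hφc : HasCompactSupport φ) (hφW : tsupport φ ⊆ W)
    (hφunstable : dirichletEnergy μ φ < potentialEnergy μ g φ)
    (hψ : ContDiff ℝ 1 ψ) (hψc : HasCompactSupport ψ) (hψW : tsupport ψ ⊆ W)
    (hdisj : Disjoint (tsupport ψ) (tsupport φ)) :
    potentialEnergy μ g ψ ≤ dirichletEnergy μ ψ := by
  have hφmean : ∫ x, φ x ∂μ ≠ 0 := fun h => (hweak φ hφ hφc hφW h).not_gt hφunstable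
  set c : ℝ := -(∫ x, ψ x ∂μ) / ∫ x, φ x ∂μ with hc
  have hmean : ∫ x, (ψ + c • φ) x ∂μ = 0 := by
    simp only [Pi.add_apply, Pi.smul_apply, smul_eq_mul]
    rw [integral_add (hψ.continuous.integrable_of_hasCompactSupport hψc)
      ((hφ.continuous.integrable_of_hasCompactSupport hφc).const_mul c), integral_const_mul,
      hc, div_mul_cancel₀ _ hφmean, add_neg_cancel]
  have hcφ : Function.support (c • φ) ⊆ Function.support φ :=
    Function.support_const_smul_subset c φ
  have hsupp : tsupport (ψ + c • φ) ⊆ W :=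
    (tsupport_add ψ (c • φ)).trans <| union_subset hψW <| (closure_mono hcφ).trans hφW
  have hstable : potentialEnergy μ g (ψ + c • φ) ≤ dirichletEnergy μ (ψ + c • φ) :=
    hweak _ (hψ.add (hφ.const_smul c)) (hψc.add (hφc.mono hcφ)) hsupp hmean
  rw [potentialEnergy_add_smul_of_disjoint hg hψ.continuous hφ.continuous hdisj,
    dirichletEnergy_add_smul_of_disjoint hψ hφ hdisj] at hstable
  exact ENNReal.le_of_add_mul_le_add_mul ENNReal.ofReal_ne_top hφunstable hstable

end Energies

section Cutoffs

variable {E : Type*} [NormedAddCommGroup E]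

/-- Since `(3/2 · s)² - s² = 5/4 · s²`, the transition from `0` to `1` takes place on
`annulus p s (3/2 * s)`. -/
def radialCutoff (p : E) (s : ℝ) (x : E) : ℝ :=
  Real.smoothTransition ((‖x - p‖ ^ 2 - s ^ 2) / (5 / 4 * s ^ 2))

theorem radialCutoff_mem_Icc (p : E) (s : ℝ) (x : E) : radialCutoff p s x ∈ Icc 0 1 :=
  ⟨Real.smoothTransition.nonneg _, Real.smoothTransition.le_one _⟩

theorem radialCutoff_eq_zero {p : E} {s : ℝ} {x : E} (hx : ‖x - p‖ ≤ s) :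
    radialCutoff p s x = 0 := by
  refine Real.smoothTransition.zero_of_nonpos (div_nonpos_of_nonpos_of_nonneg ?_ (by positivity))
  linarith [pow_le_pow_left₀ (norm_nonneg _) hx 2]

theorem radialCutoff_eq_one {p : E} {s : ℝ} (hs : 0 < s) {x : E} (hx : 3 / 2 * s ≤ ‖x - p‖) :
    radialCutoff p s x = 1 := by
  refine Real.smoothTransition.one_of_one_le ?_
  rw [one_le_div (by positivity)]
  nlinarith [pow_le_pow_left₀ (by positivity) hx 2]

def capacityCutoff (p : E) (ε : ℝ) (m : ℕ) (x : E) : ℝ :=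
  (m : ℝ)⁻¹ * ∑ j ∈ Finset.range m, radialCutoff p (ε / 2 ^ j) x

theorem abs_capacityCutoff_le_one (p : E) (ε : ℝ) (m : ℕ) (x : E) :
    |capacityCutoff p ε m x| ≤ 1 := by
  have hnonneg : 0 ≤ capacityCutoff p ε m x :=
    mul_nonneg (by positivity) (Finset.sum_nonneg fun j _ => (radialCutoff_mem_Icc p _ x).1)
  rw [abs_of_nonneg hnonneg]
  rcases eq_or_ne m 0 with rfl | hm
  · simp [capacityCutoff]
  calc capacityCutoff p ε m x ≤ (m : ℝ)⁻¹ * ∑ j ∈ Finset.range m, 1 := by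
        unfold capacityCutoff
        gcongr with j
        exact (radialCutoff_mem_Icc p _ x).2
    _ = 1 := by simp [hm]

theorem notMem_tsupport_capacityCutoff {p : E} {ε : ℝ} (hε : 0 < ε) (m : ℕ) :
    p ∉ tsupport (capacityCutoff p ε m) := by
  refine notMem_tsupport_iff_eventuallyEq.2 ?_
  filter_upwards [ball_mem_nhds p (by positivity : 0 < ε / 2 ^ m)] with x hx
  refine (mul_eq_zero_of_right _ (Finset.sum_eq_zero fun j hj => radialCutoff_eq_zero ?_))
  rw [mem_ball, dist_eq_norm] at hx
  exact hx.le.trans (div_le_div_of_nonneg_left hε.le (by positivity)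
    (pow_le_pow_right₀ one_le_two (Finset.mem_range.1 hj).le))

theorem capacityCutoff_eq_one {p : E} {ε : ℝ} (hε : 0 < ε) {m : ℕ} (hm : m ≠ 0) {x : E}
    (hx : 3 / 2 * ε ≤ ‖x - p‖) : capacityCutoff p ε m x = 1 := by
  have hone : ∀ j ∈ Finset.range m, radialCutoff p (ε / 2 ^ j) x = 1 := by
    refine fun j _ => radialCutoff_eq_one (by positivity) (le_trans ?_ hx)
    gcongr
    exact div_le_self hε.le (one_le_pow₀ one_le_two)
  simp [capacityCutoff, Finset.sum_congr rfl hone, hm]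

variable [InnerProductSpace ℝ E]

theorem contDiff_radialCutoff (p : E) (s : ℝ) {n : ℕ∞} : ContDiff ℝ n (radialCutoff p s) :=
  Real.smoothTransition.contDiff.comp
    ((((contDiff_id.sub contDiff_const).norm_sq ℝ).sub contDiff_const).div_const _)

theorem fderiv_radialCutoff_eq_zero {p : E} {s : ℝ} (hs : 0 < s) {x : E}
    (hx : x ∉ annulus p s (3 / 2 * s)) : fderiv ℝ (radialCutoff p s) x = 0 := by
  have hdist : Continuous fun y : E => ‖y - p‖ := (continuous_id.sub continuous_const).norm
  simp only [annulus, Set.mem_sdiff, mem_closedBall, mem_ball, dist_eq_norm, not_and_or, not_le,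
    not_not] at hx
  rcases hx with hx | hx
  · have hone : radialCutoff p s =ᶠ[𝓝 x] fun _ => 1 := by
      filter_upwards [(isOpen_lt continuous_const hdist).mem_nhds hx] with y hy
      exact radialCutoff_eq_one hs hy.le
    simp [hone.fderiv_eq]
  · have hzero : radialCutoff p s =ᶠ[𝓝 x] fun _ => 0 := by
      filter_upwards [(isOpen_lt hdist continuous_const).mem_nhds hx] with y hy
      exact radialCutoff_eq_zero hy.le
    simp [hzero.fderiv_eq]

theorem norm_fderiv_radialCutoff_le {p : E} {s K : ℝ} (hs : 0 < s)
    (hK : ∀ t, |deriv Real.smoothTransition t| ≤ K) {x : E} (hx : ‖x - p‖ ≤ 3 / 2 * s) :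
    ‖fderiv ℝ (radialCutoff p s) x‖ ≤ 3 * K / s := by
  set c : ℝ := 5 / 4 * s ^ 2 with hc
  have hK0 : 0 ≤ K := (abs_nonneg _).trans (hK 0)
  have harg := (((hasFDerivAt_id x).sub_const p).norm_sq.sub_const (s ^ 2)).mul_const c⁻¹
  simp only [id, ← div_eq_mul_inv, ContinuousLinearMap.comp_id] at harg
  have hcomp := ((Real.smoothTransition.contDiff (n := 1)).differentiable one_ne_zero
    _).hasDerivAt.comp_hasFDerivAt x harg
  have hinner : ‖c⁻¹ • 2 • innerSL ℝ (x - p)‖ ≤ c⁻¹ * (2 * (3 / 2 * s)) := by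
    rw [norm_smul, Real.norm_of_nonneg (by positivity)]
    gcongr
    refine norm_nsmul_le.trans ?_
    rw [innerSL_apply_norm]
    gcongr
    norm_num
  calc ‖fderiv ℝ (radialCutoff p s) x‖
      = ‖deriv Real.smoothTransition ((‖x - p‖ ^ 2 - s ^ 2) / c)‖
          * ‖c⁻¹ • 2 • innerSL ℝ (x - p)‖ := by
        rw [show radialCutoff p s = _ ∘ _ from rfl, hcomp.fderiv, norm_smul]
    _ ≤ K * (c⁻¹ * (2 * (3 / 2 * s))) := by
        gcongr
        exact (Real.norm_eq_abs _).trans_le (hK _)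
    _ ≤ 3 * K / s := by
        rw [hc]
        field_simp
        nlinarith

theorem contDiff_capacityCutoff (p : E) (ε : ℝ) (m : ℕ) :
    ContDiff ℝ 1 (capacityCutoff p ε m) :=
  contDiff_const.mul (ContDiff.sum fun _ _ => contDiff_radialCutoff p _ (n := 1))

end Cutoffs

section Capacity

variable {E : Type*} [NormedAddCommGroup E] [InnerProductSpace ℝ E] [MeasurableSpace E]
  [OpensMeasurableSpace E] {μ : Measure E} {p : E} {g : E → ℝ≥0∞}

theorem dirichletEnergy_radialCutoff_le {s K : ℝ} (hs : 0 < s)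
    (hK : ∀ t, |deriv Real.smoothTransition t| ≤ K) :
    dirichletEnergy μ (radialCutoff p s)
      ≤ ENNReal.ofReal ((3 * K / s) ^ 2) * μ (annulus p s (3 / 2 * s)) := by
  have hmeas : MeasurableSet (annulus p s (3 / 2 * s)) :=
    measurableSet_closedBall.diff measurableSet_ball
  rw [← lintegral_indicator_const hmeas]
  refine lintegral_mono fun x => ?_
  by_cases hx : x ∈ annulus p s (3 / 2 * s)
  · rw [indicator_of_mem hx]
    have hx' : ‖x - p‖ ≤ 3 / 2 * s := by simpa [dist_eq_norm] using hx.1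
    exact ENNReal.ofReal_le_ofReal
      (pow_le_pow_left₀ (norm_nonneg _) (norm_fderiv_radialCutoff_le hs hK hx') 2)
  · simp [indicator_of_notMem hx, fderiv_radialCutoff_eq_zero hs hx]

theorem dirichletEnergy_capacityCutoff_le_sum {ε : ℝ} (hε : 0 < ε) (m : ℕ) :
    dirichletEnergy μ (capacityCutoff p ε m) ≤ ENNReal.ofReal ((m : ℝ)⁻¹ ^ 2)
      * ∑ j ∈ Finset.range m, dirichletEnergy μ (radialCutoff p (ε / 2 ^ j)) := by
  have hχ : ∀ j, ContDiff ℝ 1 (radialCutoff p (ε / 2 ^ j)) := fun j => contDiff_radialCutoff p _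
  have hpoint : ∀ x, ENNReal.ofReal (‖fderiv ℝ (capacityCutoff p ε m) x‖ ^ 2)
      ≤ ENNReal.ofReal ((m : ℝ)⁻¹ ^ 2) * ∑ j ∈ Finset.range m,
        ENNReal.ofReal (‖fderiv ℝ (radialCutoff p (ε / 2 ^ j)) x‖ ^ 2) := by
    intro x
    have hdiff : ∀ j ∈ Finset.range m, DifferentiableAt ℝ (radialCutoff p (ε / 2 ^ j)) x :=
      fun j _ => (hχ j).differentiable one_ne_zero x
    have hfderiv : fderiv ℝ (capacityCutoff p ε m) x
        = (m : ℝ)⁻¹ • ∑ j ∈ Finset.range m, fderiv ℝ (radialCutoff p (ε / 2 ^ j)) x := by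
      rw [show capacityCutoff p ε m = fun x => (m : ℝ)⁻¹ * ∑ j ∈ Finset.range m,
        radialCutoff p (ε / 2 ^ j) x from rfl, fderiv_const_mul (DifferentiableAt.fun_sum hdiff),
        fderiv_fun_sum hdiff]
    have hpair : (Finset.range m : Set ℕ).Pairwise fun i j =>
        fderiv ℝ (radialCutoff p (ε / 2 ^ i)) x = 0 ∨
          fderiv ℝ (radialCutoff p (ε / 2 ^ j)) x = 0 := by
      intro i _ j _ hij
      by_cases hxi : x ∈ annulus p (ε / 2 ^ i) (3 / 2 * (ε / 2 ^ i))
      · exact Or.inr (fderiv_radialCutoff_eq_zero (by positivity)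
          ((pairwise_disjoint_annulus_dyadic p hε hij).notMem_of_mem_left hxi))
      · exact Or.inl (fderiv_radialCutoff_eq_zero (by positivity) hxi)
    rw [← ENNReal.ofReal_sum_of_nonneg (fun _ _ => by positivity),
      ← ENNReal.ofReal_mul (by positivity)]
    refine ENNReal.ofReal_le_ofReal ?_
    rw [hfderiv, norm_smul, mul_pow, Real.norm_eq_abs, sq_abs]
    exact mul_le_mul_of_nonneg_left (norm_sum_sq_le_of_pairwise hpair) (by positivity)
  refine (lintegral_mono hpoint).trans_eq ?_
  rw [lintegral_const_mul _ (Finset.measurable_sum _ fun j _ =>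
    measurable_ofReal_sq_norm_fderiv (hχ j)),
    lintegral_finsetSum _ fun j _ => measurable_ofReal_sq_norm_fderiv (hχ j)]
  rfl

theorem dirichletEnergy_capacityCutoff_le {n : ℕ} (hn : 2 ≤ n) {Λ : ℝ} (hΛ : 0 ≤ Λ)
    (hgrowth : ∀ r, 0 < r → r ≤ 1 → μ (ball p r) ≤ ENNReal.ofReal (Λ * r ^ n))
    {K : ℝ} (hK : ∀ t, |deriv Real.smoothTransition t| ≤ K) {ε : ℝ} (hε : 0 < ε)
    (hε1 : ε ≤ 1 / 2) (m : ℕ) :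
    dirichletEnergy μ (capacityCutoff p ε m) ≤ ENNReal.ofReal ((3 * K) ^ 2 * Λ * 2 ^ n / m) := by
  set C := (3 * K) ^ 2 * Λ * 2 ^ n
  have hterm (j : ℕ) : dirichletEnergy μ (radialCutoff p (ε / 2 ^ j)) ≤ ENNReal.ofReal C := by
    have hs : 0 < ε / 2 ^ j := by positivity
    refine (dirichletEnergy_radialCutoff_le hs hK).trans ?_
    exact ofReal_mul_measure_annulus_le hn hΛ hgrowth _ hs
      ((div_le_self hε.le (one_le_pow₀ one_le_two)).trans hε1)
  calc dirichletEnergy μ (capacityCutoff p ε m)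
      ≤ ENNReal.ofReal ((m : ℝ)⁻¹ ^ 2) * ∑ j ∈ Finset.range m, ENNReal.ofReal C :=
        (dirichletEnergy_capacityCutoff_le_sum hε m).trans (by gcongr with j; exact hterm j)
    _ = ENNReal.ofReal (C / m) := by
      rw [Finset.sum_const, Finset.card_range, nsmul_eq_mul, ← ENNReal.ofReal_natCast,
        ← ENNReal.ofReal_mul (Nat.cast_nonneg m), ← ENNReal.ofReal_mul (by positivity)]
      rcases eq_or_ne m 0 with rfl | hm
      · simp
      · field_simp

theorem exists_cutoff_seq_dirichletEnergy_tendsto_zero {n : ℕ} (hn : 2 ≤ n) {Λ : ℝ}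
    (hΛ : 0 ≤ Λ) (hgrowth : ∀ r, 0 < r → r ≤ 1 → μ (ball p r) ≤ ENNReal.ofReal (Λ * r ^ n)) :
    ∃ η : ℕ → E → ℝ, (∀ m, ContDiff ℝ 1 (η m)) ∧ (∀ m x, |η m x| ≤ 1) ∧
      (∀ m, p ∉ tsupport (η m)) ∧ (∀ᵐ x ∂μ, ∀ᶠ m in atTop, η m x = 1) ∧
      Tendsto (fun m => dirichletEnergy μ (η m)) atTop (𝓝 0) := by
  obtain ⟨K, hK⟩ := exists_abs_deriv_smoothTransition_le
  set ε : ℕ → ℝ := fun m => 1 / (2 * ((m : ℝ) + 1))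
  have hε (m : ℕ) : 0 < ε m := by positivity
  have hε1 (m : ℕ) : ε m ≤ 1 / 2 :=
    one_div_le_one_div_of_le two_pos (by linarith [m.cast_nonneg (α := ℝ)])
  refine ⟨fun m => capacityCutoff p (ε m) (m + 1), fun m => contDiff_capacityCutoff _ _ _,
    fun m => abs_capacityCutoff_le_one _ _ _, fun m => notMem_tsupport_capacityCutoff (hε m) _,
    ?_, ?_⟩
  · have hlim : Tendsto (fun m => 3 / 2 * ε m) atTop (𝓝 0) := by
      have h := tendsto_one_div_add_atTop_nhds_zero_nat.const_mul (3 / 4 : ℝ)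
      rw [mul_zero] at h
      refine h.congr fun m => ?_
      simp only [ε]
      field_simp
      ring
    filter_upwards [measure_eq_zero_iff_ae_notMem.1
      (measure_singleton_eq_zero_of_growth (by omega) hgrowth)] with x hx
    filter_upwards [hlim.eventually_lt_const (norm_pos_iff.2 (sub_ne_zero.2 hx))] with m hm
    exact capacityCutoff_eq_one (hε m) m.succ_ne_zero hm.le
  · have hlim := ENNReal.tendsto_ofReal
      ((tendsto_const_div_atTop_nhds_zero_nat ((3 * K) ^ 2 * Λ * 2 ^ n)).comp
        (tendsto_add_atTop_nat 1))
    rw [ENNReal.ofReal_zero] at hlim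
    exact tendsto_of_tendsto_of_tendsto_of_le_of_le tendsto_const_nhds hlim (fun _ => zero_le)
      fun m => dirichletEnergy_capacityCutoff_le hn hΛ hgrowth hK (hε m) (hε1 m) (m + 1)

theorem potentialEnergy_le_of_forall_tsupport_subset_diff_singleton {n : ℕ} (hn : 2 ≤ n)
    {Λ : ℝ} (hΛ : 0 ≤ Λ)
    (hgrowth : ∀ r, 0 < r → r ≤ 1 → μ (ball p r) ≤ ENNReal.ofReal (Λ * r ^ n))
    (hg : Measurable g) {W : Set E}
    (hpunct : ∀ ψ : E → ℝ, ContDiff ℝ 1 ψ → HasCompactSupport ψ → tsupport ψ ⊆ W \ {p} →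
      potentialEnergy μ g ψ ≤ dirichletEnergy μ ψ) :
    ∀ φ : E → ℝ, ContDiff ℝ 1 φ → HasCompactSupport φ → tsupport φ ⊆ W →
      potentialEnergy μ g φ ≤ dirichletEnergy μ φ := by
  intro φ hφ hφc hφW
  obtain ⟨η, hη, hη1, hηp, hηae, hηE⟩ :=
    exists_cutoff_seq_dirichletEnergy_tendsto_zero hn hΛ hgrowth
  obtain ⟨M, hM⟩ := hφ.continuous.bounded_above_of_compact_support hφc
  set a := eLpNorm (fun x => ‖fderiv ℝ φ x‖) 2 μ
  set b := fun m => eLpNorm (fun x => ‖fderiv ℝ (η m) x‖) 2 μ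
  have hb : Tendsto b atTop (𝓝 0) := by
    have h := ((ENNReal.continuous_rpow_const (y := 2⁻¹)).tendsto 0).comp hηE
    rw [ENNReal.zero_rpow_of_pos (by norm_num)] at h
    refine h.congr fun m => ?_
    simp only [comp_apply, dirichletEnergy_eq_eLpNorm_sq]
    exact_mod_cast ENNReal.pow_rpow_inv_natCast two_ne_zero _
  have hbound : Tendsto (fun m => (a + ‖M‖ₑ * b m) ^ 2) atTop (𝓝 (dirichletEnergy μ φ)) := by
    have := ((ENNReal.continuous_pow 2).tendsto _).comp ((tendsto_const_nhds (x := a)).add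
      (ENNReal.Tendsto.const_mul hb (Or.inr (enorm_ne_top (x := M)))))
    rw [dirichletEnergy_eq_eLpNorm_sq]
    simpa only [comp_def, mul_zero, add_zero] using this
  have hstable (m : ℕ) : potentialEnergy μ g (φ * η m) ≤ (a + ‖M‖ₑ * b m) ^ 2 := by
    have hsupp : tsupport (φ * η m) ⊆ W \ {p} :=
      subset_sdiff_singleton (tsupport_mul_subset_left.trans hφW)
        fun h => hηp m (tsupport_mul_subset_right h)
    calc potentialEnergy μ g (φ * η m) ≤ dirichletEnergy μ (φ * η m) :=
          hpunct _ (hφ.mul (hη m)) hφc.mul_right hsupp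
      _ = eLpNorm (fun x => ‖fderiv ℝ (φ * η m) x‖) 2 μ ^ 2 := dirichletEnergy_eq_eLpNorm_sq _
      _ ≤ (a + ‖M‖ₑ * b m) ^ 2 := by
          gcongr
          exact eLpNorm_norm_fderiv_mul_le hφ (hη m)
            (fun x => (Real.norm_eq_abs _).symm.trans_le (hM x)) (hη1 m)
  calc potentialEnergy μ g φ
      = ∫⁻ x, liminf (fun m => g x * ENNReal.ofReal ((φ * η m) x ^ 2)) atTop ∂μ := by
        refine lintegral_congr_ae (hηae.mono fun x hx => ?_)
        refine (tendsto_const_nhds.congr' (hx.mono fun m hm => ?_)).liminf_eq.symm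
        simp [hm]
    _ ≤ liminf (fun m => potentialEnergy μ g (φ * η m)) atTop :=
        lintegral_liminf_le' fun m => (hg.mul
          ((hφ.continuous.mul (hη m).continuous).measurable.pow_const 2).ennreal_ofReal).aemeasurable
    _ ≤ liminf (fun m => (a + ‖M‖ₑ * b m) ^ 2) atTop := liminf_le_liminf (.of_forall hstable)
    _ = dirichletEnergy μ φ := hbound.liminf_eq

end Capacity

theorem weak_implies_strong_smaller_ball_general
    (N n : ℕ) (hn : 2 ≤ n) (Λ : ℝ) (hΛ : 0 < Λ)
    (μ : Measure (En N)) [IsLocallyFiniteMeasure μ]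
    (hgrowth : ∀ (x : En N) (r : ℝ), 0 < r → r ≤ 1 →
        μ (ball x r) ≤ ENNReal.ofReal (Λ * r ^ n))
    (g : En N → ℝ≥0∞) (hg : Measurable g)
    (p : En N) (R : ℝ) (hR : 0 < R)
    (hweak : weakStab N μ g (ball p R)) :
    ∃ r : ℝ, 0 < r ∧ r < R ∧ strongStab N μ g (ball p r) := by
  by_contra! hfail
  have hunstable (ρ : ℝ) (hρ : 0 < ρ) (hρR : ρ < R) : ∃ φ : En N → ℝ, ContDiff ℝ 1 φ ∧
      HasCompactSupport φ ∧ tsupport φ ⊆ ball p ρ ∧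
      dirichletEnergy μ φ < potentialEnergy μ g φ := by
    simpa [strongStab, potentialEnergy, dirichletEnergy] using hfail ρ hρ hρR
  refine hfail (R / 2) (half_pos hR) (half_lt_self hR) ?_
  refine potentialEnergy_le_of_forall_tsupport_subset_diff_singleton hn hΛ.le (hgrowth p) hg
    fun ψ hψ hψc hψW => ?_
  obtain ⟨ρ, hρ, hρψ⟩ :=
    Metric.isOpen_iff.1 (isClosed_tsupport ψ).isOpen_compl p fun hp => (hψW hp).2 rfl
  obtain ⟨φ, hφ, hφc, hφρ, hφunstable⟩ := hunstable (min ρ (R / 2))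
    (lt_min hρ (half_pos hR)) ((min_le_right _ _).trans_lt (half_lt_self hR))
  have hR2 : ball p (R / 2) ⊆ ball p R := ball_subset_ball (half_le_self hR.le)
  exact potentialEnergy_le_of_disjoint_unstable hg hweak hφ hφc
    (hφρ.trans ((ball_subset_ball (min_le_right _ _)).trans hR2)) hφunstable hψ hψc
    (hψW.trans (sdiff_subset.trans hR2))
    (disjoint_compl_right.mono_right (hφρ.trans ((ball_subset_ball (min_le_left _ _)).trans hρψ)))

/-- **Weak stability in a ball implies strong stability in a smaller concentric ball**
(Remark 2.6 of the paper: dichotomy plus capacity argument, for measures with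
`n`-dimensional volume growth, `n ≥ 2`). -/
theorem weak_implies_strong_smaller_ball
    (N n : ℕ) (hN : 1 ≤ N) (hn : 2 ≤ n) (Λ : ℝ) (hΛ : 0 < Λ)
    (μ : Measure (En N)) [IsLocallyFiniteMeasure μ]
    (hgrowth : ∀ (x : En N) (r : ℝ), 0 < r → r ≤ 1 →
        μ (ball x r) ≤ ENNReal.ofReal (Λ * r ^ n))
    (g : En N → ℝ≥0∞) (hg : Measurable g)
    (p : En N) (R : ℝ) (hR : 0 < R) (hR1 : R ≤ 1)
    (hweak : weakStab N μ g (ball p R)) :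
    ∃ r : ℝ, 0 < r ∧ r < R ∧ strongStab N μ g (ball p r) :=
  weak_implies_strong_smaller_ball_general N n hn Λ hΛ μ hgrowth g hg p R hR hweak
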